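/- arXiv:2011.06360 — 2 statements merged into one kernel-verified Lean document; each statement's English description precedes it below -/
import Mathlib

section
/- There exists a constant C > 0, depending only on ψ, ν₁ and ν₂, such that for all T > 1, |vol(E_T) − c_{ν₁} · c_{ν₂} · Σ_{1 ≤ t < T, t ∈ ℕ} ψ(t)| ≤ C. -/
/-!
Homogeneity of a norm `p` on a `d`-dimensional space gives `vol {p ^ d < a} = a · vol {p < 1}`,
so the push-forward of Lebesgue measure under `p ^ d` is `vol {p < 1}` times Lebesgue measure on
`[0, ∞)`. By Fubini, the slice of `E_T` over `y` has volume `c_{ν₁} ψ(ν₂(y)^n)`, and pushing forward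
under `ν₂ ^ n` gives `vol E_T = c_{ν₁} c_{ν₂} ∫_1^T ψ`. For antitone `ψ ≥ 0` this integral differs
from the sum `∑_{1 ≤ t < ⌈T⌉} ψ t` by at most `ψ 1`.
-/

open MeasureTheory Set Module
open scoped ENNReal

theorem MeasureTheory.Measure.ext_of_Iio' {α : Type*} [TopologicalSpace α] [MeasurableSpace α]
    [SecondCountableTopology α] [LinearOrder α] [OrderTopology α] [BorelSpace α] [NoMaxOrder α]
    {μ ν : Measure α} (hμ : ∀ a, μ (Iio a) ≠ ∞) (h : ∀ a, μ (Iio a) = ν (Iio a)) : μ = ν := by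
  have hsplit (ρ : Measure α) {a b} (hab : a ≤ b) : ρ (Iio a) + ρ (Ico a b) = ρ (Iio b) := by
    rw [← measure_union ((Iio_disjoint_Ici le_rfl).mono_right Ico_subset_Ici_self)
      measurableSet_Ico, Iio_union_Ico_eq_Iio hab]
  refine Measure.ext_of_Ico' μ ν (fun a b _ => ?_) fun a b hab => ?_
  · exact ne_top_of_le_ne_top (hμ b) (measure_mono Ico_subset_Iio_self)
  · rw [← ENNReal.add_right_inj (hμ a), hsplit μ hab.le, h, h a, hsplit ν hab.le]

namespace Seminorm

variable {E : Type*} [NormedAddCommGroup E] [NormedSpace ℝ E] [FiniteDimensional ℝ E]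
  (p : Seminorm ℝ E)

protected theorem continuous_of_finiteDimensional : Continuous p :=
  p.convexOn.locallyLipschitz.continuous

theorem exists_pos_mul_norm_le [Nontrivial E] (hp : ∀ x, p x = 0 → x = 0) :
    ∃ c > 0, ∀ x, c * ‖x‖ ≤ p x := by
  obtain ⟨z, hz, hmin⟩ := (isCompact_sphere (0 : E) 1).exists_isMinOn
    (NormedSpace.sphere_nonempty.mpr zero_le_one) p.continuous_of_finiteDimensional.continuousOn
  have hz0 : z ≠ 0 := ne_zero_of_mem_sphere one_ne_zero ⟨z, hz⟩
  refine ⟨p z, (apply_nonneg p z).lt_of_ne' (mt (hp z) hz0), fun x => ?_⟩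
  rcases eq_or_ne x 0 with rfl | hx
  · simp
  have hx' : 0 < ‖x‖ := norm_pos_iff.mpr hx
  have hunit : ‖x‖⁻¹ • x ∈ Metric.sphere (0 : E) 1 := by
    simp [norm_smul, hx'.ne']
  calc p z * ‖x‖ ≤ p (‖x‖⁻¹ • x) * ‖x‖ := by gcongr; exact hmin hunit
    _ = p x := by rw [map_smul_eq_mul, norm_inv, norm_norm]; field_simp

variable [MeasurableSpace E] (μ : Measure E) [μ.IsAddHaarMeasure]

theorem measure_ball_zero_one_pos : 0 < μ (p.ball 0 1) := by
  rw [ball_zero_eq]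
  exact (isOpen_lt p.continuous_of_finiteDimensional continuous_const).measure_pos μ ⟨0, by simp⟩

theorem measure_ball_zero_one_lt_top [Nontrivial E] (hp : ∀ x, p x = 0 → x = 0) :
    μ (p.ball 0 1) < ∞ := by
  obtain ⟨c, hc, hcp⟩ := p.exists_pos_mul_norm_le hp
  refine ((Metric.isBounded_ball (x := (0 : E)) (r := c⁻¹)).subset fun x hx => ?_).measure_lt_top
  rw [mem_ball_zero_iff, ← one_div, lt_div_iff₀' hc]
  exact (hcp x).trans_lt (p.mem_ball_zero.mp hx)

theorem toReal_measure_ball_zero_one_pos [Nontrivial E] (hp : ∀ x, p x = 0 → x = 0) :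
    0 < (μ (p.ball 0 1)).toReal :=
  ENNReal.toReal_pos (p.measure_ball_zero_one_pos μ).ne' (p.measure_ball_zero_one_lt_top μ hp).ne

variable [BorelSpace E]

theorem measure_ball_zero {r : ℝ} (hr : 0 < r) :
    μ (p.ball 0 r) = ENNReal.ofReal (r ^ finrank ℝ E) * μ (p.ball 0 1) := by
  have := μ.addHaar_smul r (p.ball 0 1)
  rwa [smul_ball_zero hr.ne', Real.norm_of_nonneg hr.le, mul_one,
    abs_of_pos (by positivity)] at this

theorem measure_setOf_pow_finrank_lt [Nontrivial E] (a : ℝ) :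
    μ {x | p x ^ finrank ℝ E < a} = ENNReal.ofReal a * μ (p.ball 0 1) := by
  rcases le_or_gt a 0 with ha | ha
  · have : {x | p x ^ finrank ℝ E < a} = ∅ :=
      eq_empty_of_forall_notMem fun x hx => (ha.trans (by positivity)).not_gt hx
    simp [this, ENNReal.ofReal_of_nonpos ha]
  have hd : finrank ℝ E ≠ 0 := finrank_pos.ne'
  have hr : (a ^ (finrank ℝ E : ℝ)⁻¹) ^ finrank ℝ E = a := Real.rpow_inv_natCast_pow ha.le hd
  have hball : {x | p x ^ finrank ℝ E < a} = p.ball 0 (a ^ (finrank ℝ E : ℝ)⁻¹) := by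
    ext x
    rw [mem_ball_zero, mem_ofPred_eq,
      ← pow_lt_pow_iff_left₀ (apply_nonneg p x) (by positivity) hd, hr]
  rw [hball, measure_ball_zero p μ (by positivity), hr]

theorem map_pow_finrank [Nontrivial E] (hp : ∀ x, p x = 0 → x = 0) :
    μ.map (fun x => p x ^ finrank ℝ E) = μ (p.ball 0 1) • volume.restrict (Ici 0) := by
  have hIio (a : ℝ) :
      μ.map (fun x => p x ^ finrank ℝ E) (Iio a) = ENNReal.ofReal a * μ (p.ball 0 1) := by
    rw [Measure.map_apply (p.continuous_of_finiteDimensional.measurable.pow_const _)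
      measurableSet_Iio]
    exact p.measure_setOf_pow_finrank_lt μ a
  refine Measure.ext_of_Iio' (fun a => ?_) fun a => ?_
  · rw [hIio]
    exact ENNReal.mul_ne_top ENNReal.ofReal_ne_top (p.measure_ball_zero_one_lt_top μ hp).ne
  · rw [hIio, Measure.smul_apply, Measure.restrict_apply measurableSet_Iio, Iio_inter_Ici,
      Real.volume_Ico, sub_zero, smul_eq_mul, mul_comm]

theorem lintegral_comp_pow_finrank [Nontrivial E] (hp : ∀ x, p x = 0 → x = 0) {f : ℝ → ℝ≥0∞}
    (hf : Measurable f) :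
    ∫⁻ x, f (p x ^ finrank ℝ E) ∂μ = μ (p.ball 0 1) * ∫⁻ t in Ici 0, f t := by
  rw [← lintegral_map hf (p.continuous_of_finiteDimensional.measurable.pow_const _),
    p.map_pow_finrank μ hp, lintegral_smul_measure, smul_eq_mul]

end Seminorm

theorem AntitoneOn.abs_intervalIntegral_sub_sum_Ico_ceil_le {f : ℝ → ℝ}
    (hf : AntitoneOn f (Ici 1)) (hf0 : ∀ t ≥ 1, 0 ≤ f t) {T : ℝ} (hT : 1 < T) :
    |(∫ t in (1 : ℝ)..T, f t) - ∑ k ∈ Finset.Ico 1 ⌈T⌉₊, f k| ≤ f 1 := by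
  set K := ⌈T⌉₊
  have hTK : T ≤ K := Nat.le_ceil T
  have hKT : (K : ℝ) < T + 1 := Nat.ceil_lt_add_one (by linarith)
  have hK : 2 ≤ K := by
    have : (1 : ℝ) < K := hT.trans_le hTK
    exact_mod_cast this
  have hmono {a b : ℕ} (ha : 1 ≤ a) : AntitoneOn f (Icc (a : ℝ) b) :=
    hf.mono fun t ht => le_trans (by exact_mod_cast ha) ht.1
  have hint {a b : ℝ} (ha : 1 ≤ a) (hb : 1 ≤ b) : IntervalIntegrable f volume a b :=
    (hf.mono fun t ht => le_trans (le_min ha hb) ht.1).intervalIntegrable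
  have hpos {a b : ℝ} (ha : 1 ≤ a) : 0 ≤ᵐ[volume.restrict (Ioc a b)] f :=
    ae_restrict_of_forall_mem measurableSet_Ioc fun t ht => hf0 t (ha.trans ht.1.le)
  have hupper : ∫ t in (1 : ℝ)..T, f t ≤ ∑ k ∈ Finset.Ico 1 K, f k := calc
    ∫ t in (1 : ℝ)..T, f t ≤ ∫ t in (1 : ℝ)..K, f t :=
      intervalIntegral.integral_mono_interval le_rfl hT.le hTK (hpos le_rfl)
        (hint le_rfl (by linarith))
    _ ≤ ∑ k ∈ Finset.Ico 1 K, f k := by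
      simpa using (hmono le_rfl).integral_le_sum_Ico (by omega : 1 ≤ K)
  have hlower : ∑ k ∈ Finset.Ico 1 K, f k - f 1 ≤ ∫ t in (1 : ℝ)..T, f t := calc
    ∑ k ∈ Finset.Ico 1 K, f k - f 1 = ∑ k ∈ Finset.Ico 1 (K - 1), f ↑(k + 1) := by
      rw [Finset.sum_eq_sum_Ico_succ_bot (by omega), Finset.sum_Ico_add' (fun k : ℕ => f k),
        Nat.sub_add_cancel (by omega)]
      simp
    _ ≤ ∫ t in (1 : ℝ)..↑(K - 1), f t := by
      simpa using (hmono le_rfl).sum_le_integral_Ico (by omega : 1 ≤ K - 1)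
    _ ≤ ∫ t in (1 : ℝ)..T, f t := by
      refine intervalIntegral.integral_mono_interval le_rfl ?_ ?_ (hpos le_rfl) (hint le_rfl hT.le)
      · exact_mod_cast (by omega : 1 ≤ K - 1)
      · rw [Nat.cast_sub (by omega), Nat.cast_one]
        linarith
  rw [abs_le]
  constructor <;> linarith [hf0 1 le_rfl]

theorem lintegral_ofReal_indicator_eq_ofReal_integral {α : Type*} [MeasurableSpace α]
    {μ : Measure α} {s t : Set α} {f : α → ℝ} (hs : MeasurableSet s) (hst : s ⊆ t)
    (hf : IntegrableOn f s μ) (hf0 : ∀ x ∈ s, 0 ≤ f x) :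
    ∫⁻ x in t, ENNReal.ofReal (s.indicator f x) ∂μ = ENNReal.ofReal (∫ x in s, f x ∂μ) := by
  rw [show (fun x => ENNReal.ofReal (s.indicator f x)) = s.indicator (ENNReal.ofReal ∘ f) from
    (indicator_comp_of_zero ENNReal.ofReal_zero).symm, lintegral_indicator hs,
    Measure.restrict_restrict hs, inter_eq_left.mpr hst,
    ofReal_integral_eq_lintegral_ofReal hf (ae_restrict_of_forall_mem hs hf0)]
  rfl

theorem setOf_lt_and_mem_eq_setOf_lt_indicator {α : Type*} {f h : α → ℝ} {g : ℝ → ℝ}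
    {s : Set ℝ} (hf : ∀ x, 0 ≤ f x) :
    {x | f x < g (h x) ∧ h x ∈ s} = {x | f x < s.indicator g (h x)} := by
  ext x
  by_cases hx : h x ∈ s
  · simp [hx]
  · simpa [hx] using hf x

theorem AntitoneOn.measurable_indicator {f : ℝ → ℝ} {a : ℝ} {s : Set ℝ}
    (hf : AntitoneOn f (Ici a)) (hs : MeasurableSet s) (hsa : s ⊆ Ici a) :
    Measurable (s.indicator f) := by
  have hanti : Antitone fun t => f (max a t) := fun t u htu =>
    hf (le_max_left a t) (le_max_left a u) (max_le_max le_rfl htu)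
  rw [indicator_congr fun t ht => congrArg f (max_eq_right (hsa ht)).symm]
  exact hanti.measurable.indicator hs

section Product

variable {E F : Type*} [NormedAddCommGroup E] [NormedSpace ℝ E] [FiniteDimensional ℝ E]
  [Nontrivial E] [MeasurableSpace E] [BorelSpace E] (μ : Measure E) [μ.IsAddHaarMeasure]
  [NormedAddCommGroup F] [NormedSpace ℝ F] [FiniteDimensional ℝ F]
  [Nontrivial F] [MeasurableSpace F] [BorelSpace F] (ν : Measure F) [ν.IsAddHaarMeasure]

theorem Seminorm.measure_prod_setOf_pow_finrank_lt (p : Seminorm ℝ E) (q : Seminorm ℝ F)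
    (hq : ∀ y, q y = 0 → y = 0) {g : ℝ → ℝ} (hg : Measurable g) :
    μ.prod ν {z | p z.1 ^ finrank ℝ E < g (q z.2 ^ finrank ℝ F)} =
      μ (p.ball 0 1) * ν (q.ball 0 1) * ∫⁻ t in Ici 0, ENNReal.ofReal (g t) := by
  have hp := p.continuous_of_finiteDimensional.measurable
  have hq' := q.continuous_of_finiteDimensional.measurable
  have hg' : Measurable fun y => ENNReal.ofReal (g (q y ^ finrank ℝ F)) := by fun_prop
  rw [Measure.prod_apply_symm (measurableSet_lt (by fun_prop) (by fun_prop))]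
  calc ∫⁻ y, μ {x | p x ^ finrank ℝ E < g (q y ^ finrank ℝ F)} ∂ν
      = ∫⁻ y, μ (p.ball 0 1) * ENNReal.ofReal (g (q y ^ finrank ℝ F)) ∂ν := by
        simp_rw [p.measure_setOf_pow_finrank_lt μ, mul_comm]
    _ = _ := by
        rw [lintegral_const_mul _ hg', q.lintegral_comp_pow_finrank ν hq
          (f := fun t => ENNReal.ofReal (g t)) (by fun_prop), mul_assoc]

theorem Seminorm.measure_prod_setOf_pow_finrank_lt_of_antitoneOn (p : Seminorm ℝ E)
    (q : Seminorm ℝ F) (hq : ∀ y, q y = 0 → y = 0) {ψ : ℝ → ℝ} {a b : ℝ} (ha : 0 ≤ a)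
    (hab : a ≤ b) (hψ : AntitoneOn ψ (Ici a)) (hψ0 : ∀ t ≥ a, 0 ≤ ψ t) :
    μ.prod ν {z | p z.1 ^ finrank ℝ E < ψ (q z.2 ^ finrank ℝ F) ∧ q z.2 ^ finrank ℝ F ∈ Ico a b} =
      μ (p.ball 0 1) * ν (q.ball 0 1) * ENNReal.ofReal (∫ t in a..b, ψ t) := by
  have hint : IntegrableOn ψ (Ico a b) :=
    ((hψ.mono Icc_subset_Ici_self).integrableOn_isCompact isCompact_Icc).mono_set
      Ico_subset_Icc_self
  rw [setOf_lt_and_mem_eq_setOf_lt_indicator (f := fun z : E × F => p z.1 ^ finrank ℝ E)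
      (h := fun z => q z.2 ^ finrank ℝ F) fun z => pow_nonneg (apply_nonneg p z.1) _,
    p.measure_prod_setOf_pow_finrank_lt μ ν q hq
      (hψ.measurable_indicator measurableSet_Ico Ico_subset_Ici_self),
    lintegral_ofReal_indicator_eq_ofReal_integral (t := Ici 0) measurableSet_Ico
      (fun t ht => ha.trans ht.1) hint fun t ht => hψ0 t ht.1,
    integral_Ico_eq_integral_Ioc, ← intervalIntegral.integral_of_le hab]

end Product

theorem volume_ET_sum_general (m n : ℕ) (hm : 1 ≤ m) (hn : 1 ≤ n)
    (ψ : ℝ → ℝ)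
    (hψpos : ∀ t : ℝ, 1 ≤ t → 0 < ψ t)
    (hψanti : AntitoneOn ψ (Set.Ici 1))
    (ν₁ : (Fin m → ℝ) → ℝ)
    (hν₁add : ∀ x y, ν₁ (x + y) ≤ ν₁ x + ν₁ y)
    (hν₁smul : ∀ (c : ℝ) x, ν₁ (c • x) = |c| * ν₁ x)
    (hν₁def : ∀ x, ν₁ x = 0 ↔ x = 0)
    (ν₂ : (Fin n → ℝ) → ℝ)
    (hν₂add : ∀ x y, ν₂ (x + y) ≤ ν₂ x + ν₂ y)
    (hν₂smul : ∀ (c : ℝ) x, ν₂ (c • x) = |c| * ν₂ x)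
    (hν₂def : ∀ x, ν₂ x = 0 ↔ x = 0) :
    ∃ C : ℝ, 0 < C ∧ ∀ T : ℝ, 1 < T →
      |(volume {p : (Fin m → ℝ) × (Fin n → ℝ) |
          ν₁ p.1 ^ m < ψ (ν₂ p.2 ^ n) ∧ 1 ≤ ν₂ p.2 ^ n ∧ ν₂ p.2 ^ n < T}).toReal
        - (volume {x : Fin m → ℝ | ν₁ x < 1}).toReal
          * (volume {y : Fin n → ℝ | ν₂ y < 1}).toReal
          * ∑ t ∈ Finset.Ico 1 ⌈T⌉₊, ψ t| ≤ C := by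
  have : Nonempty (Fin m) := ⟨⟨0, hm⟩⟩
  have : Nonempty (Fin n) := ⟨⟨0, hn⟩⟩
  let p₁ : Seminorm ℝ (Fin m → ℝ) := .of ν₁ hν₁add hν₁smul
  let p₂ : Seminorm ℝ (Fin n → ℝ) := .of ν₂ hν₂add hν₂smul
  have hc : 0 < (volume (p₁.ball 0 1)).toReal * (volume (p₂.ball 0 1)).toReal :=
    mul_pos (p₁.toReal_measure_ball_zero_one_pos volume fun x => (hν₁def x).1)
      (p₂.toReal_measure_ball_zero_one_pos volume fun y => (hν₂def y).1)
  refine ⟨_, mul_pos hc (hψpos 1 le_rfl), fun T hT => ?_⟩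
  have hvol := p₁.measure_prod_setOf_pow_finrank_lt_of_antitoneOn volume volume p₂
    (fun y => (hν₂def y).1) zero_le_one hT.le hψanti fun t ht => (hψpos t ht).le
  rw [finrank_fin_fun, finrank_fin_fun, ← Measure.volume_eq_prod] at hvol
  -- the two sets agree only up to unfolding `Seminorm.of` and `Ico`
  erw [hvol, ← p₁.ball_zero_eq, ← p₂.ball_zero_eq]
  rw [ENNReal.toReal_mul, ENNReal.toReal_mul, ENNReal.toReal_ofReal
      (intervalIntegral.integral_nonneg hT.le fun t ht => (hψpos t ht.1).le),
    ← mul_sub, abs_mul, abs_of_pos hc]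
  exact mul_le_mul_of_nonneg_left (hψanti.abs_intervalIntegral_sub_sum_Ico_ceil_le
    (fun t ht => (hψpos t ht).le) hT) hc.le

theorem volume_ET_sum (m n : ℕ) (hm : 1 ≤ m) (hn : 1 ≤ n)
    (ψ : ℝ → ℝ)
    (hψpos : ∀ t : ℝ, 1 ≤ t → 0 < ψ t)
    (hψcont : ContinuousOn ψ (Set.Ici 1))
    (hψanti : AntitoneOn ψ (Set.Ici 1))
    (ν₁ : (Fin m → ℝ) → ℝ)
    (hν₁add : ∀ x y, ν₁ (x + y) ≤ ν₁ x + ν₁ y)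
    (hν₁smul : ∀ (c : ℝ) x, ν₁ (c • x) = |c| * ν₁ x)
    (hν₁def : ∀ x, ν₁ x = 0 ↔ x = 0)
    (ν₂ : (Fin n → ℝ) → ℝ)
    (hν₂add : ∀ x y, ν₂ (x + y) ≤ ν₂ x + ν₂ y)
    (hν₂smul : ∀ (c : ℝ) x, ν₂ (c • x) = |c| * ν₂ x)
    (hν₂def : ∀ x, ν₂ x = 0 ↔ x = 0) :
    ∃ C : ℝ, 0 < C ∧ ∀ T : ℝ, 1 < T →
      |(volume {p : (Fin m → ℝ) × (Fin n → ℝ) |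
          ν₁ p.1 ^ m < ψ (ν₂ p.2 ^ n) ∧ 1 ≤ ν₂ p.2 ^ n ∧ ν₂ p.2 ^ n < T}).toReal
        - (volume {x : Fin m → ℝ | ν₁ x < 1}).toReal
          * (volume {y : Fin n → ℝ | ν₂ y < 1}).toReal
          * ∑ t ∈ Finset.Ico 1 ⌈T⌉₊, ψ t| ≤ C :=
  volume_ET_sum_general m n hm hn ψ hψpos hψanti ν₁ hν₁add hν₁smul hν₁def ν₂ hν₂add hν₂smul hν₂def
end

section
/- There exists a constant C > 0, depending only on ψ, ν₁ and ν₂, such that for all ε ∈ (0, 1/2) and all T > 10, |vol(E⁺_{T,ε}) − (1+ε)² · c_{ν₁} · c_{ν₂} · ∫₁^T ψ(r) dr| ≤ C and |vol(E⁻_{T,ε}) − (1+ε)^{-2} · c_{ν₁} · c_{ν₂} · ∫₁^T ψ(r) dr| ≤ C. -/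
open MeasureTheory Set Filter

/-- The set `E⁻_{T,ε}` from the paper, as a subset of `ℝ^m × ℝ^n`. -/
def Eminus (m n : ℕ) (ψ : ℝ → ℝ) (ν₁ : (Fin m → ℝ) → ℝ) (ν₂ : (Fin n → ℝ) → ℝ)
    (ε T : ℝ) : Set ((Fin m → ℝ) × (Fin n → ℝ)) :=
  {p | ν₁ p.1 ^ m < (1 + ε)⁻¹ * ψ ((1 + ε) * ν₂ p.2 ^ n)
    ∧ 3/2 ≤ ν₂ p.2 ^ n ∧ ν₂ p.2 ^ n < (1 + ε)⁻¹ * T}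

/-- The set `E'_{T,ε}` from the paper. -/
def Eprime (m n : ℕ) (ψ : ℝ → ℝ) (ν₁ : (Fin m → ℝ) → ℝ) (ν₂ : (Fin n → ℝ) → ℝ)
    (ε T : ℝ) : Set ((Fin m → ℝ) × (Fin n → ℝ)) :=
  {p | ν₁ p.1 ^ m < (1 + ε) * ψ ((1 + ε)⁻¹ * ν₂ p.2 ^ n)
    ∧ 3/2 ≤ ν₂ p.2 ^ n ∧ ν₂ p.2 ^ n < (1 + ε) * T}

/-- The set `C₀` from the paper. -/
def Czero (m n : ℕ) (ψ : ℝ → ℝ) (ν₁ : (Fin m → ℝ) → ℝ) (ν₂ : (Fin n → ℝ) → ℝ) :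
    Set ((Fin m → ℝ) × (Fin n → ℝ)) :=
  {p | ν₁ p.1 ^ m < 2 * ψ 1 ∧ 1/2 < ν₂ p.2 ^ n ∧ ν₂ p.2 ^ n ≤ 3/2}

/-- The set `E⁺_{T,ε} = E'_{T,ε} ∪ C₀` from the paper. -/
def Eplus (m n : ℕ) (ψ : ℝ → ℝ) (ν₁ : (Fin m → ℝ) → ℝ) (ν₂ : (Fin n → ℝ) → ℝ)
    (ε T : ℝ) : Set ((Fin m → ℝ) × (Fin n → ℝ)) :=
  Eprime m n ψ ν₁ ν₂ ε T ∪ Czero m n ψ ν₁ ν₂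

/-!
If `ν` is a norm on `ℝᵏ`, homogeneity gives `vol {ν(y)ᵏ < t} = t · c_ν`, so the push-forward of
Lebesgue measure under `y ↦ ν(y)ᵏ` is `c_ν` times Lebesgue measure on `[0, ∞)`. By Fubini, the
region `{ν₁(x)ᵐ < g(ν₂(y)ⁿ), ν₂(y)ⁿ ∈ [a, b)}` therefore has volume `c_{ν₁} c_{ν₂} ∫ₐᵇ g`. For
`E'` and `E⁻` the substitution `r ↦ (1+ε)^{∓1} r` turns this into `(1+ε)^{±2} c_{ν₁} c_{ν₂}` times
`∫ ψ` over `[(1+ε)^{∓1}·3/2, T]`, which misses the main term only by the integral of the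
non-increasing `ψ` over an interval of length at most `5/4` starting at `1`. The set `C₀`
contributes a bounded volume.
-/

open Module

section FiniteDimensional

variable {E : Type*} [NormedAddCommGroup E] [NormedSpace ℝ E] [FiniteDimensional ℝ E]

theorem Seminorm.continuous_of_finiteDimensional_s7 (p : Seminorm ℝ E) : Continuous p :=
  continuousOn_univ.mp (p.convexOn.continuousOn isOpen_univ)

theorem Seminorm.exists_pos_mul_norm_le_s7 [Nontrivial E] (p : Seminorm ℝ E)
    (hp : ∀ x, p x = 0 → x = 0) : ∃ c, 0 < c ∧ ∀ x, c * ‖x‖ ≤ p x := by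
  obtain ⟨u, hu, hmin⟩ := (isCompact_sphere (0 : E) 1).exists_isMinOn
    (NormedSpace.sphere_nonempty.mpr zero_le_one) p.continuous_of_finiteDimensional_s7.continuousOn
  have hu₀ : u ≠ 0 := ne_zero_of_mem_sphere one_ne_zero ⟨u, hu⟩
  refine ⟨p u, (apply_nonneg p u).lt_of_ne' (mt (hp u) hu₀), fun x => ?_⟩
  rcases eq_or_ne x 0 with rfl | hx
  · simp
  have hx' : 0 < ‖x‖ := norm_pos_iff.mpr hx
  have hle : p u ≤ ‖x‖⁻¹ * p x := by
    simpa [map_smul_eq_mul] using hmin (a := ‖x‖⁻¹ • x) (by simp [norm_smul, hx'.ne'])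
  calc p u * ‖x‖ ≤ ‖x‖⁻¹ * p x * ‖x‖ := by gcongr
    _ = p x := by field_simp

variable [MeasurableSpace E] (μ : Measure E) [μ.IsAddHaarMeasure]

theorem Seminorm.addHaar_ball_zero_pos (p : Seminorm ℝ E) {r : ℝ} (hr : 0 < r) :
    0 < μ (p.ball 0 r) := by
  refine IsOpen.measure_pos μ ?_ ⟨0, by simpa using hr⟩
  rw [p.ball_zero_eq]
  exact isOpen_lt p.continuous_of_finiteDimensional_s7 continuous_const

theorem Seminorm.addHaar_ball_zero_lt_top [Nontrivial E] (p : Seminorm ℝ E)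
    (hp : ∀ x, p x = 0 → x = 0) (r : ℝ) : μ (p.ball 0 r) < ⊤ := by
  obtain ⟨c, hc, hle⟩ := p.exists_pos_mul_norm_le_s7 hp
  refine (measure_mono fun x hx => ?_).trans_lt (measure_closedBall_lt_top (x := 0) (r := r / c))
  rw [mem_closedBall_zero_iff, le_div_iff₀' hc]
  exact (hle x).trans (p.mem_ball_zero.mp hx).le

variable [BorelSpace E]

theorem Seminorm.addHaar_ball_zero (p : Seminorm ℝ E) {r : ℝ} (hr : 0 < r) :
    μ (p.ball 0 r) = ENNReal.ofReal (r ^ finrank ℝ E) * μ (p.ball 0 1) := by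
  rw [← Measure.addHaar_smul_of_nonneg μ hr.le, p.smul_ball_zero hr.ne', Real.norm_of_nonneg hr.le,
    mul_one]

theorem Seminorm.addHaar_setOf_pow_finrank_lt [Nontrivial E] (p : Seminorm ℝ E) (t : ℝ) :
    μ {x | p x ^ finrank ℝ E < t} = ENNReal.ofReal t * μ (p.ball 0 1) := by
  have hd : finrank ℝ E ≠ 0 := finrank_pos.ne'
  rcases le_or_gt t 0 with ht | ht
  · have : {x | p x ^ finrank ℝ E < t} = ∅ :=
      eq_empty_of_forall_notMem fun x hx => (ht.trans (by positivity)).not_gt hx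
    simp [this, ENNReal.ofReal_eq_zero.mpr ht]
  · set r := t ^ (finrank ℝ E : ℝ)⁻¹
    have hr : 0 < r := by positivity
    have hrt : r ^ finrank ℝ E = t := Real.rpow_inv_natCast_pow ht.le hd
    have hball : {x | p x ^ finrank ℝ E < t} = p.ball 0 r := by
      ext x
      rw [p.mem_ball_zero, mem_ofPred_eq, ← hrt, pow_lt_pow_iff_left₀ (apply_nonneg p x) hr.le hd]
    rw [hball, p.addHaar_ball_zero μ hr, hrt]

theorem Seminorm.map_pow_finrank_addHaar [Nontrivial E] (p : Seminorm ℝ E)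
    (hp : ∀ x, p x = 0 → x = 0) :
    μ.map (fun x => p x ^ finrank ℝ E) = μ (p.ball 0 1) • volume.restrict (Ici 0) := by
  set c := μ (p.ball 0 1)
  have hc : c ≠ ⊤ := (p.addHaar_ball_zero_lt_top μ hp 1).ne
  have hmeas : Measurable fun x => p x ^ finrank ℝ E :=
    (p.continuous_of_finiteDimensional_s7.pow _).measurable
  have hmap (t : ℝ) : μ.map (fun x => p x ^ finrank ℝ E) (Iio t) = ENNReal.ofReal t * c := by
    rw [Measure.map_apply hmeas measurableSet_Iio]
    exact p.addHaar_setOf_pow_finrank_lt μ t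
  have hvol (t : ℝ) : (c • volume.restrict (Ici 0)) (Iio t) = ENNReal.ofReal t * c := by
    rw [Measure.smul_apply, Measure.restrict_apply measurableSet_Iio, Iio_inter_Ici,
      Real.volume_Ico, sub_zero, smul_eq_mul, mul_comm]
  have hIco (ρ : Measure ℝ) (hρ : ∀ t, ρ (Iio t) = ENNReal.ofReal t * c) {a b : ℝ} (hab : a < b) :
      ρ (Ico a b) = (ENNReal.ofReal b - ENNReal.ofReal a) * c := by
    rw [← Iio_sdiff_Iio, measure_sdiff (Iio_subset_Iio hab.le) measurableSet_Iio.nullMeasurableSet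
      (by rw [hρ]; exact ENNReal.mul_ne_top ENNReal.ofReal_ne_top hc), hρ, hρ,
      ENNReal.sub_mul fun _ _ => hc]
  refine (Measure.ext_of_Ico' _ _ (fun a b hab => ?_) fun a b hab => ?_).symm
  · exact hIco _ hvol hab ▸ ENNReal.mul_ne_top (by simp) hc
  · rw [hIco _ hvol hab, hIco _ hmap hab]

variable {F : Type*} [NormedAddCommGroup F] [NormedSpace ℝ F] [FiniteDimensional ℝ F]
  [MeasurableSpace F] [BorelSpace F] (ν : Measure F) [ν.IsAddHaarMeasure]

theorem Seminorm.prod_subgraph_eq_lintegral [Nontrivial E] [Nontrivial F]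
    (p : Seminorm ℝ E) (q : Seminorm ℝ F) (hq : ∀ y, q y = 0 → y = 0) {g : ℝ → ℝ}
    (hg : Measurable g) {s : Set ℝ} (hs : MeasurableSet s) (hs₀ : s ⊆ Ici 0) :
    μ.prod ν {z | p z.1 ^ finrank ℝ E < g (q z.2 ^ finrank ℝ F) ∧ q z.2 ^ finrank ℝ F ∈ s} =
      (∫⁻ t in s, ENNReal.ofReal (g t)) * μ (p.ball 0 1) * ν (q.ball 0 1) := by
  have hq' : Measurable fun y => q y ^ finrank ℝ F :=
    (q.continuous_of_finiteDimensional_s7.pow _).measurable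
  have hp' : Measurable fun x => p x ^ finrank ℝ E :=
    (p.continuous_of_finiteDimensional_s7.pow _).measurable
  have hS : MeasurableSet
      {z : E × F | p z.1 ^ finrank ℝ E < g (q z.2 ^ finrank ℝ F) ∧ q z.2 ^ finrank ℝ F ∈ s} :=
    (measurableSet_lt (hp'.comp measurable_fst) (hg.comp (hq'.comp measurable_snd))).inter
      (hq'.comp measurable_snd hs)
  set G : ℝ → ENNReal := s.indicator fun t => ENNReal.ofReal (g t) * μ (p.ball 0 1)
  have hG : Measurable G := (hg.ennreal_ofReal.mul_const _).indicator hs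
  have hslice (y : F) : μ ((·, y) ⁻¹' {z | p z.1 ^ finrank ℝ E < g (q z.2 ^ finrank ℝ F) ∧
      q z.2 ^ finrank ℝ F ∈ s}) = G (q y ^ finrank ℝ F) := by
    by_cases hy : q y ^ finrank ℝ F ∈ s
    · simpa [G, hy] using p.addHaar_setOf_pow_finrank_lt μ _
    · simp [G, hy]
  rw [Measure.prod_apply_symm hS, lintegral_congr hslice, ← lintegral_map hG hq',
    q.map_pow_finrank_addHaar ν hq, lintegral_smul_measure, lintegral_indicator hs,
    Measure.restrict_restrict hs, inter_eq_left.mpr hs₀, lintegral_mul_const _ hg.ennreal_ofReal,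
    smul_eq_mul, mul_comm]

theorem Seminorm.prod_subgraph_Ico [Nontrivial E] [Nontrivial F]
    (p : Seminorm ℝ E) (q : Seminorm ℝ F) (hq : ∀ y, q y = 0 → y = 0) {g : ℝ → ℝ}
    (hg : Continuous g) (hg₀ : ∀ t, 0 ≤ g t) {a b : ℝ} (ha : 0 ≤ a) (hab : a ≤ b) :
    μ.prod ν {z | p z.1 ^ finrank ℝ E < g (q z.2 ^ finrank ℝ F) ∧ q z.2 ^ finrank ℝ F ∈ Ico a b} =
      ENNReal.ofReal (∫ t in a..b, g t) * μ (p.ball 0 1) * ν (q.ball 0 1) := by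
  rw [p.prod_subgraph_eq_lintegral μ ν q hq hg.measurable measurableSet_Ico
      fun t ht => ha.trans ht.1, Measure.restrict_congr_set Ico_ae_eq_Ioc,
    ← ofReal_integral_eq_lintegral_ofReal hg.integrableOn_Ioc (ae_of_all _ hg₀),
    intervalIntegral.integral_of_le hab]

end FiniteDimensional

theorem AntitoneOn.intervalIntegral_le_sub_mul {f : ℝ → ℝ} {a b : ℝ} (hab : a ≤ b)
    (hf : AntitoneOn f (Icc a b)) : ∫ x in a..b, f x ≤ (b - a) * f a := by
  have hf' : AntitoneOn f (uIcc a b) := by rwa [uIcc_of_le hab]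
  calc ∫ x in a..b, f x ≤ ∫ _ in a..b, f a :=
        intervalIntegral.integral_mono_on hab hf'.intervalIntegrable intervalIntegrable_const
          fun x hx => hf (left_mem_Icc.mpr hab) hx hx.1
    _ = (b - a) * f a := by rw [intervalIntegral.integral_const, smul_eq_mul]

theorem exists_integral_eq_add_of_antitoneOn {ψ : ℝ → ℝ} (hψ₀ : ∀ t, 1 ≤ t → 0 ≤ ψ t)
    (hψ : ContinuousOn ψ (Ici 1)) (hψanti : AntitoneOn ψ (Ici 1)) {a T : ℝ} (ha : 1 ≤ a)
    (haT : a ≤ T) :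
    ∃ D, 0 ≤ D ∧ D ≤ (a - 1) * ψ 1 ∧ ∫ r in (1 : ℝ)..T, ψ r = D + ∫ r in a..T, ψ r := by
  have hint {x y : ℝ} (hx : 1 ≤ x) (hxy : x ≤ y) : IntervalIntegrable ψ volume x y :=
    (hψ.mono (Icc_subset_Ici_self.trans (Ici_subset_Ici.mpr hx))).intervalIntegrable_of_Icc hxy
  exact ⟨∫ r in (1 : ℝ)..a, ψ r, intervalIntegral.integral_nonneg ha fun t ht => hψ₀ t ht.1,
    (hψanti.mono Icc_subset_Ici_self).intervalIntegral_le_sub_mul ha,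
    (intervalIntegral.integral_add_adjacent_intervals (hint le_rfl ha) (hint ha haT)).symm⟩

section Subgraph

variable {m n : ℕ} [NeZero m] [NeZero n] (p₁ : Seminorm ℝ (Fin m → ℝ))
  (p₂ : Seminorm ℝ (Fin n → ℝ)) (hp₂ : ∀ y, p₂ y = 0 → y = 0)

include hp₂

theorem volume_subgraph_Ico {g : ℝ → ℝ} (hg : Continuous g) (hg₀ : ∀ t, 0 ≤ g t) {a b : ℝ}
    (ha : 0 ≤ a) (hab : a ≤ b) :
    volume {z : (Fin m → ℝ) × (Fin n → ℝ) | p₁ z.1 ^ m < g (p₂ z.2 ^ n) ∧ p₂ z.2 ^ n ∈ Ico a b} =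
      ENNReal.ofReal (∫ t in a..b, g t) * volume (p₁.ball 0 1) * volume (p₂.ball 0 1) := by
  simpa only [finrank_fin_fun, ← Measure.volume_eq_prod] using
    p₁.prod_subgraph_Ico volume volume p₂ hp₂ hg hg₀ ha hab

variable {ψ : ℝ → ℝ} (hψ₀ : ∀ t, 1 ≤ t → 0 ≤ ψ t)
include hψ₀

theorem volume_Czero_le :
    volume (Czero m n ψ p₁ p₂) ≤
      ENNReal.ofReal (4 * ψ 1) * volume (p₁.ball 0 1) * volume (p₂.ball 0 1) := by
  have hψ1 := hψ₀ 1 le_rfl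
  calc volume (Czero m n ψ p₁ p₂)
      ≤ volume {z : (Fin m → ℝ) × (Fin n → ℝ) |
          p₁ z.1 ^ m < 2 * ψ 1 ∧ p₂ z.2 ^ n ∈ Ico 0 2} :=
        measure_mono fun z hz => ⟨hz.1, by positivity, by linarith [hz.2.2]⟩
    _ = _ := by
        rw [volume_subgraph_Ico p₁ p₂ hp₂ (g := fun _ => 2 * ψ 1) continuous_const
          (fun _ => by positivity) le_rfl zero_le_two, intervalIntegral.integral_const]
        norm_num [mul_comm, mul_left_comm]

variable (hψ : ContinuousOn ψ (Ici 1))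
include hψ

theorem volume_dilatedSubgraph {c T : ℝ} (hc : 0 < c) (hc' : c ≤ 3 / 2) (hT : c⁻¹ * (3 / 2) ≤ T) :
    volume {z : (Fin m → ℝ) × (Fin n → ℝ) | p₁ z.1 ^ m < c * ψ (c⁻¹ * p₂ z.2 ^ n) ∧
        3 / 2 ≤ p₂ z.2 ^ n ∧ p₂ z.2 ^ n < c * T} =
      ENNReal.ofReal (c ^ 2 * ∫ r in c⁻¹ * (3 / 2)..T, ψ r) *
        volume (p₁.ball 0 1) * volume (p₂.ball 0 1) := by
  -- `ψ` clamped to `[1, ∞)`, so that the product formula applies to a continuous function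
  set Ψ : ℝ → ℝ := fun t => ψ (max 1 t)
  have hΨ : Continuous Ψ := hψ.comp_continuous (by fun_prop) fun t => le_max_left 1 t
  have hset : {z : (Fin m → ℝ) × (Fin n → ℝ) | p₁ z.1 ^ m < c * ψ (c⁻¹ * p₂ z.2 ^ n) ∧
      3 / 2 ≤ p₂ z.2 ^ n ∧ p₂ z.2 ^ n < c * T} =
      {z | p₁ z.1 ^ m < c * Ψ (c⁻¹ * p₂ z.2 ^ n) ∧ p₂ z.2 ^ n ∈ Ico (3 / 2) (c * T)} := by
    ext z
    refine and_congr_left fun hz => ?_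
    have h1 : 1 ≤ c⁻¹ * p₂ z.2 ^ n := by rw [le_inv_mul_iff₀ hc]; linarith [hz.1]
    simp only [Ψ, max_eq_right h1]
  have hint : ∫ t in (3 / 2)..c * T, c * Ψ (c⁻¹ * t) = c ^ 2 * ∫ r in c⁻¹ * (3 / 2)..T, ψ r := by
    rw [intervalIntegral.integral_const_mul,
      intervalIntegral.integral_comp_mul_left _ (inv_ne_zero hc.ne'), inv_mul_cancel_left₀ hc.ne',
      smul_eq_mul, inv_inv, ← mul_assoc, ← sq]
    congr 1
    refine intervalIntegral.integral_congr fun t ht => ?_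
    rw [uIcc_of_le hT] at ht
    have h1 : 1 ≤ t := le_trans (by rw [le_inv_mul_iff₀ hc]; linarith) ht.1
    simp only [Ψ, max_eq_right h1]
  rw [hset, volume_subgraph_Ico p₁ p₂ hp₂ (g := fun t => c * Ψ (c⁻¹ * t))
    (continuous_const.mul (hΨ.comp (continuous_const_mul _)))
    (fun t => mul_nonneg hc.le (hψ₀ _ (le_max_left _ _))) (by norm_num)
    (by nlinarith [mul_inv_cancel₀ hc.ne']), hint]

theorem volume_Eprime {ε T : ℝ} (hε : 0 ≤ ε) (hε' : ε ≤ 1 / 2) (hT : (1 + ε)⁻¹ * (3 / 2) ≤ T) :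
    volume (Eprime m n ψ p₁ p₂ ε T) = ENNReal.ofReal ((1 + ε) ^ 2 *
      ∫ r in (1 + ε)⁻¹ * (3 / 2)..T, ψ r) * volume (p₁.ball 0 1) * volume (p₂.ball 0 1) :=
  volume_dilatedSubgraph p₁ p₂ hp₂ hψ₀ hψ (by positivity) (by linarith) hT

theorem volume_Eminus {ε T : ℝ} (hε : 0 ≤ ε) (hT : (1 + ε) * (3 / 2) ≤ T) :
    volume (Eminus m n ψ p₁ p₂ ε T) = ENNReal.ofReal (((1 + ε) ^ 2)⁻¹ *
      ∫ r in (1 + ε) * (3 / 2)..T, ψ r) * volume (p₁.ball 0 1) * volume (p₂.ball 0 1) := by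
  have h := volume_dilatedSubgraph p₁ p₂ hp₂ hψ₀ hψ (c := (1 + ε)⁻¹) (T := T) (by positivity)
    (inv_le_one_of_one_le₀ (by linarith) |>.trans (by norm_num)) (by rwa [inv_inv])
  rwa [inv_inv, inv_pow] at h

theorem abs_volume_Eminus_sub_le (hψanti : AntitoneOn ψ (Ici 1)) {ε T : ℝ} (hε : 0 ≤ ε)
    (hε' : ε ≤ 1 / 2) (hT : (1 + ε) * (3 / 2) ≤ T) :
    |(volume (Eminus m n ψ p₁ p₂ ε T)).toReal - ((1 + ε) ^ 2)⁻¹ * (volume (p₁.ball 0 1)).toReal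
        * (volume (p₂.ball 0 1)).toReal * ∫ r in (1 : ℝ)..T, ψ r| ≤
      5 / 4 * (volume (p₁.ball 0 1)).toReal * (volume (p₂.ball 0 1)).toReal * ψ 1 := by
  have ha : 1 ≤ (1 + ε) * (3 / 2) := by linarith
  obtain ⟨D, hD₀, hD, hsplit⟩ := exists_integral_eq_add_of_antitoneOn hψ₀ hψ hψanti ha hT
  rw [volume_Eminus p₁ p₂ hp₂ hψ₀ hψ hε hT, ENNReal.toReal_mul, ENNReal.toReal_mul,
    ENNReal.toReal_ofReal (mul_nonneg (by positivity) (intervalIntegral.integral_nonneg hT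
      fun t ht => hψ₀ t (ha.trans ht.1))), hsplit]
  set A := (volume (p₁.ball 0 1)).toReal
  set B := (volume (p₂.ball 0 1)).toReal
  have hAB : 0 ≤ A * B := by positivity
  have he : ((1 + ε) ^ 2)⁻¹ ≤ 1 := inv_le_one_of_one_le₀ (one_le_pow₀ (by linarith))
  calc _ = |-(((1 + ε) ^ 2)⁻¹ * (A * B) * D)| := by ring_nf
    _ = ((1 + ε) ^ 2)⁻¹ * (A * B) * D := by rw [abs_neg, abs_of_nonneg (by positivity)]
    _ ≤ 1 * (A * B) * (5 / 4 * ψ 1) := by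
        gcongr
        nlinarith [hψ₀ 1 le_rfl]
    _ = _ := by ring

theorem toReal_volume_Eprime_le_toReal_volume_Eplus_le (hp₁ : ∀ x, p₁ x = 0 → x = 0) {ε T : ℝ}
    (hε : 0 ≤ ε) (hε' : ε ≤ 1 / 2) (hT : (1 + ε)⁻¹ * (3 / 2) ≤ T) :
    (volume (Eprime m n ψ p₁ p₂ ε T)).toReal ≤ (volume (Eplus m n ψ p₁ p₂ ε T)).toReal ∧
      (volume (Eplus m n ψ p₁ p₂ ε T)).toReal ≤ (volume (Eprime m n ψ p₁ p₂ ε T)).toReal +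
        4 * (volume (p₁.ball 0 1)).toReal * (volume (p₂.ball 0 1)).toReal * ψ 1 := by
  have hfin₁ := (p₁.addHaar_ball_zero_lt_top volume hp₁ 1).ne
  have hfin₂ := (p₂.addHaar_ball_zero_lt_top volume hp₂ 1).ne
  have hE' : volume (Eprime m n ψ p₁ p₂ ε T) ≠ ⊤ := by
    rw [volume_Eprime p₁ p₂ hp₂ hψ₀ hψ hε hε' hT]; finiteness
  have hC := volume_Czero_le p₁ p₂ hp₂ hψ₀
  have hCle := ENNReal.toReal_mono (by finiteness) hC
  rw [ENNReal.toReal_mul, ENNReal.toReal_mul,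
    ENNReal.toReal_ofReal (by linarith [hψ₀ 1 le_rfl])] at hCle
  refine ⟨ENNReal.toReal_mono (measure_union_ne_top hE' (ne_top_of_le_ne_top (by finiteness) hC))
    (measure_mono subset_union_left), ?_⟩
  calc (volume (Eplus m n ψ p₁ p₂ ε T)).toReal
      ≤ (volume (Eprime m n ψ p₁ p₂ ε T)).toReal + (volume (Czero m n ψ p₁ p₂)).toReal :=
        measureReal_union_le _ _
    _ ≤ _ := by linarith

theorem abs_volume_Eplus_sub_le (hp₁ : ∀ x, p₁ x = 0 → x = 0) (hψanti : AntitoneOn ψ (Ici 1))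
    {ε T : ℝ} (hε : 0 ≤ ε) (hε' : ε ≤ 1 / 2) (hT : (1 + ε)⁻¹ * (3 / 2) ≤ T) :
    |(volume (Eplus m n ψ p₁ p₂ ε T)).toReal - (1 + ε) ^ 2 * (volume (p₁.ball 0 1)).toReal
        * (volume (p₂.ball 0 1)).toReal * ∫ r in (1 : ℝ)..T, ψ r| ≤
      4 * (volume (p₁.ball 0 1)).toReal * (volume (p₂.ball 0 1)).toReal * ψ 1 := by
  have ha : 1 ≤ (1 + ε)⁻¹ * (3 / 2) := by rw [le_inv_mul_iff₀ (by positivity)]; linarith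
  obtain ⟨D, hD₀, hD, hsplit⟩ := exists_integral_eq_add_of_antitoneOn hψ₀ hψ hψanti ha hT
  obtain ⟨hlower, hupper⟩ :=
    toReal_volume_Eprime_le_toReal_volume_Eplus_le p₁ p₂ hp₂ hψ₀ hψ hp₁ hε hε' hT
  rw [volume_Eprime p₁ p₂ hp₂ hψ₀ hψ hε hε' hT, ENNReal.toReal_mul, ENNReal.toReal_mul,
    ENNReal.toReal_ofReal (mul_nonneg (by positivity) (intervalIntegral.integral_nonneg hT
      fun t ht => hψ₀ t (ha.trans ht.1)))] at hlower hupper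
  rw [hsplit]
  set A := (volume (p₁.ball 0 1)).toReal
  set B := (volume (p₂.ball 0 1)).toReal
  have hAB : 0 ≤ A * B := by positivity
  have hD' : (1 + ε) ^ 2 * D ≤ 9 / 8 * ψ 1 := by
    have h₁ : (1 + ε)⁻¹ * (3 / 2) - 1 ≤ 1 / 2 := by
      linarith [inv_le_one_of_one_le₀ (by linarith : (1 : ℝ) ≤ 1 + ε)]
    calc (1 + ε) ^ 2 * D ≤ 9 / 4 * (1 / 2 * ψ 1) := by
          gcongr
          · nlinarith
          · exact hD.trans (by gcongr; exact hψ₀ 1 le_rfl)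
      _ = 9 / 8 * ψ 1 := by ring
  have h₁ := mul_le_mul_of_nonneg_left hD' hAB
  have h₂ : 0 ≤ A * B * ((1 + ε) ^ 2 * D) := by positivity
  rw [abs_le]
  constructor <;> linarith

end Subgraph

theorem volume_Eplus_Eminus (m n : ℕ) (hm : 1 ≤ m) (hn : 1 ≤ n)
    (ψ : ℝ → ℝ)
    (hψpos : ∀ t : ℝ, 1 ≤ t → 0 < ψ t)
    (hψcont : ContinuousOn ψ (Set.Ici 1))
    (hψanti : AntitoneOn ψ (Set.Ici 1))
    (ν₁ : (Fin m → ℝ) → ℝ)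
    (hν₁add : ∀ x y, ν₁ (x + y) ≤ ν₁ x + ν₁ y)
    (hν₁smul : ∀ (c : ℝ) x, ν₁ (c • x) = |c| * ν₁ x)
    (hν₁def : ∀ x, ν₁ x = 0 ↔ x = 0)
    (ν₂ : (Fin n → ℝ) → ℝ)
    (hν₂add : ∀ x y, ν₂ (x + y) ≤ ν₂ x + ν₂ y)
    (hν₂smul : ∀ (c : ℝ) x, ν₂ (c • x) = |c| * ν₂ x)
    (hν₂def : ∀ x, ν₂ x = 0 ↔ x = 0) :
    ∃ C : ℝ, 0 < C ∧ ∀ ε : ℝ, 0 < ε → ε < 1/2 → ∀ T : ℝ, 10 < T →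
      |(volume (Eplus m n ψ ν₁ ν₂ ε T)).toReal
        - (1 + ε) ^ 2 * (volume {x : Fin m → ℝ | ν₁ x < 1}).toReal
          * (volume {y : Fin n → ℝ | ν₂ y < 1}).toReal * ∫ r in (1:ℝ)..T, ψ r| ≤ C
      ∧
      |(volume (Eminus m n ψ ν₁ ν₂ ε T)).toReal
        - ((1 + ε) ^ 2)⁻¹ * (volume {x : Fin m → ℝ | ν₁ x < 1}).toReal
          * (volume {y : Fin n → ℝ | ν₂ y < 1}).toReal * ∫ r in (1:ℝ)..T, ψ r| ≤ C := by
  have : NeZero m := ⟨by omega⟩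
  have : NeZero n := ⟨by omega⟩
  let p₁ : Seminorm ℝ (Fin m → ℝ) := .of ν₁ hν₁add fun c x => by rw [hν₁smul, Real.norm_eq_abs]
  let p₂ : Seminorm ℝ (Fin n → ℝ) := .of ν₂ hν₂add fun c x => by rw [hν₂smul, Real.norm_eq_abs]
  have hp₁ (x) : p₁ x = 0 → x = 0 := (hν₁def x).mp
  have hp₂ (y) : p₂ y = 0 → y = 0 := (hν₂def y).mp
  have hψ₀ (t) (ht : 1 ≤ t) : 0 ≤ ψ t := (hψpos t ht).le
  have hψ1 : 0 < ψ 1 := hψpos 1 le_rfl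
  have hA : 0 < (volume (p₁.ball 0 1)).toReal := ENNReal.toReal_pos
    (p₁.addHaar_ball_zero_pos volume one_pos).ne' (p₁.addHaar_ball_zero_lt_top volume hp₁ 1).ne
  have hB : 0 < (volume (p₂.ball 0 1)).toReal := ENNReal.toReal_pos
    (p₂.addHaar_ball_zero_pos volume one_pos).ne' (p₂.addHaar_ball_zero_lt_top volume hp₂ 1).ne
  rw [show {x | ν₁ x < 1} = p₁.ball 0 1 from p₁.ball_zero_eq.symm,
    show {y | ν₂ y < 1} = p₂.ball 0 1 from p₂.ball_zero_eq.symm]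
  refine ⟨4 * (volume (p₁.ball 0 1)).toReal * (volume (p₂.ball 0 1)).toReal * ψ 1,
    by positivity, fun ε hε₀ hε T hT => ⟨?_, ?_⟩⟩
  · exact abs_volume_Eplus_sub_le p₁ p₂ hp₂ hψ₀ hψcont hp₁ hψanti hε₀.le hε.le
      (by nlinarith [inv_le_one_of_one_le₀ (by linarith : (1 : ℝ) ≤ 1 + ε)])
  · refine (abs_volume_Eminus_sub_le p₁ p₂ hp₂ hψ₀ hψcont hψanti hε₀.le hε.le
      (by nlinarith)).trans ?_
    gcongr
    norm_num
end
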